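/- Let H be a subgraph of the bunkbed graph of G_2^k lying in the event C (each of the three gadgets has some fully open column j with its vertical edge), and let \gamma(H) be the subgraph of the bunkbed graph of G_1 obtained by contracting, for each i \in \{2,5,8\} and \varepsilon \in \{-,+\}, the vertices i_a^\varepsilon, i_b^\varepsilon, i_1^\varepsilon,\dots,i_k^\varepsilon to a single vertex i^\varepsilon. Then for each \varepsilon \in \{-,+\}, H contains a directed path from 1^- to 9^\varepsilon if and only if \gamma(H) does. -/
import Mathlib


/-- Edges of the bunkbed graph of a directed graph on vertex type `V`:
`horiz u v ε` is the copy of the directed edge `(u,v)` in bunk `ε`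
(`false` = lower bunk `-`, `true` = upper bunk `+`); `vert w` is the
bidirected vertical edge `(w⁻, w⁺)`. -/
inductive BBEdge (V : Type) : Type
  | horiz : V → V → Bool → BBEdge V
  | vert  : V → BBEdge V
deriving DecidableEq

/-- The `F`-mirroring map on single edges: vertical edges are fixed, a horizontal
edge whose shadow lies in `F` is sent to its mirrored copy in the other bunk, and
horizontal edges with shadow outside `F` are fixed. -/
def mir {V : Type} [DecidableEq V] (F : Finset (V × V)) : BBEdge V → BBEdge V
  | .horiz u v ε => if (u, v) ∈ F then .horiz u v (!ε) else .horiz u v ε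
  | .vert w => .vert w

/-- The `F`-mirrored subgraph `M(H,F)`. -/
def M {V : Type} [DecidableEq V] (H : Finset (BBEdge V)) (F : Finset (V × V)) :
    Finset (BBEdge V) :=
  H.image (mir F)
/-- The edge set of the bunkbed graph of the directed graph with vertex set `Vs`
and edge set `E`: the vertical edges at all vertices together with the two
horizontal copies of each edge. -/
def bbEdges {V : Type} [DecidableEq V] (Vs : Finset V) (E : Finset (V × V)) :
    Finset (BBEdge V) :=
  Vs.image BBEdge.vert ∪ E.image (fun p => BBEdge.horiz p.1 p.2 false) ∪
    E.image (fun p => BBEdge.horiz p.1 p.2 true)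

/-- One step of directed traversal in a subgraph `H` of the bunkbed graph:
horizontal edges are used in their direction within a bunk, and vertical edges
may be traversed in both directions. Vertices of the bunkbed graph are pairs
`(w, ε)` with `ε : Bool` the bunk label (`false` = `-`, `true` = `+`). -/
def bbStep {V : Type} [DecidableEq V] (H : Finset (BBEdge V)) :
    V × Bool → V × Bool → Prop := fun a b =>
  (a.1 = b.1 ∧ a.2 ≠ b.2 ∧ BBEdge.vert a.1 ∈ H) ∨
    (a.2 = b.2 ∧ BBEdge.horiz a.1 b.1 a.2 ∈ H)

/-- Directed reachability `x → y` in a subgraph of the bunkbed graph. -/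
def bbReach {V : Type} [DecidableEq V] (H : Finset (BBEdge V))
    (a b : V × Bool) : Prop :=
  Relation.ReflTransGen (bbStep H) a b

/-- The edge set of the graph `G₁` of Przybyłowski's counterexample, on
vertices `1,…,9`. -/
def E1 : Finset (ℕ × ℕ) :=
  {(1,2), (1,4), (2,3), (3,4), (4,5), (3,7), (5,6), (6,7), (6,9), (7,8), (8,9)}

/-- The vertex set of `G₁`. -/
def V1 : Finset ℕ := {1, 2, 3, 4, 5, 6, 7, 8, 9}

/-- The conditioning set `T = {2,5,8}`. -/
def T1 : Finset ℕ := {2, 5, 8}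

/-- The vertices of `G₁` that are blown up into gadgets. -/
def gset : Finset ℕ := {2, 5, 8}

/-- Vertices of the blown-up graph `G₂ᵏ`: `orig n` is an untouched vertex `n` of
`G₁`; for `i ∈ {2,5,8}`, `ga i` is the entry vertex `i_a`, `gb i` the exit vertex
`i_b`, and `mid i j` the middle vertex `i_j`. -/
inductive GV : Type
  | orig : ℕ → GV
  | ga : ℕ → GV
  | gb : ℕ → GV
  | mid : ℕ → ℕ → GV
deriving DecidableEq

/-- The vertex of `G₂ᵏ` from which the copies of the out-edges of `x` leave. -/
def srcV (x : ℕ) : GV := if x ∈ gset then .gb x else .orig x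

/-- The vertex of `G₂ᵏ` to which the copies of the in-edges of `y` point. -/
def tgtV (y : ℕ) : GV := if y ∈ gset then .ga y else .orig y

/-- The edge set of `G₂ᵏ`: every edge `(x,y)` of `G₁` becomes an edge from `srcV x`
to `tgtV y`, and each gadget `i ∈ {2,5,8}` gets internal edges `(i_a, i_j)` and
`(i_j, i_b)` for `j ∈ {1,…,k}`. -/
def E2 (k : ℕ) : Finset (GV × GV) :=
  E1.image (fun p => (srcV p.1, tgtV p.2)) ∪
    (gset ×ˢ Finset.Icc 1 k).image (fun p => (GV.ga p.1, GV.mid p.1 p.2)) ∪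
    (gset ×ˢ Finset.Icc 1 k).image (fun p => (GV.mid p.1 p.2, GV.gb p.1))

/-- The vertex set of `G₂ᵏ`. -/
def Vs2 (k : ℕ) : Finset GV :=
  (V1 \ gset).image GV.orig ∪ gset.image GV.ga ∪ gset.image GV.gb ∪
    (gset ×ˢ Finset.Icc 1 k).image (fun p => GV.mid p.1 p.2)

/-- The event `C`: for each `i ∈ {2,5,8}` there is some `j ∈ {1,…,k}` such that all
five edges `(i_j⁻, i_j⁺)`, `(i_a^±, i_j^±)`, `(i_j^±, i_b^±)` are retained. -/
def Cev (k : ℕ) (H : Finset (BBEdge GV)) : Prop :=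
  ∀ i ∈ gset, ∃ j ∈ Finset.Icc 1 k,
    BBEdge.vert (GV.mid i j) ∈ H ∧
    BBEdge.horiz (GV.ga i) (GV.mid i j) false ∈ H ∧
    BBEdge.horiz (GV.ga i) (GV.mid i j) true ∈ H ∧
    BBEdge.horiz (GV.mid i j) (GV.gb i) false ∈ H ∧
    BBEdge.horiz (GV.mid i j) (GV.gb i) true ∈ H

/-- The quotient map contracting each gadget to its original vertex of `G₁`. -/
def qmap : GV → ℕ
  | .orig n => n
  | .ga i => i
  | .gb i => i
  | .mid i _ => i

/-- The induced map on bunkbed edges. -/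
def contrEdge : BBEdge GV → BBEdge ℕ
  | .horiz x y ε => .horiz (qmap x) (qmap y) ε
  | .vert w => .vert (qmap w)

/-- Whether a bunkbed edge is not a loop. -/
def notLoop : BBEdge ℕ → Prop
  | .horiz x y _ => x ≠ y
  | .vert _ => True

/-- The contraction `γ(H)` of a subgraph `H` of the bunkbed graph of `G₂ᵏ`: for each
`i ∈ {2,5,8}` and each bunk, the vertices `i_a, i_b, i_1, …, i_k` are contracted to
the single vertex `i`, retained edges map accordingly, and loops are erased. -/
noncomputable def contr (H : Finset (BBEdge GV)) : Finset (BBEdge ℕ) :=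
  letI := Classical.decPred notLoop
  (H.image contrEdge).filter notLoop

lemma qmap_srcV (x : ℕ) : qmap (srcV x) = x := by
  unfold srcV; split <;> rfl

lemma qmap_tgtV (y : ℕ) : qmap (tgtV y) = y := by
  unfold tgtV; split <;> rfl

lemma mem_contr {H : Finset (BBEdge GV)} {e : BBEdge ℕ} :
    e ∈ contr H ↔ (∃ e' ∈ H, contrEdge e' = e) ∧ notLoop e := by
  simp [contr, Finset.mem_filter, Finset.mem_image]

lemma bbEdges_cases {V : Type} [DecidableEq V] {Vs : Finset V} {E : Finset (V × V)}
    {e : BBEdge V} (h : e ∈ bbEdges Vs E) :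
    (∃ w ∈ Vs, e = .vert w) ∨ ∃ p ∈ E, ∃ ε, e = BBEdge.horiz p.1 p.2 ε := by
  simp only [bbEdges, Finset.mem_union, Finset.mem_image] at h
  rcases h with (⟨w, hw, rfl⟩ | ⟨p, hp, rfl⟩) | ⟨p, hp, rfl⟩
  · exact Or.inl ⟨w, hw, rfl⟩
  · exact Or.inr ⟨p, hp, false, rfl⟩
  · exact Or.inr ⟨p, hp, true, rfl⟩

lemma Vs2_orig {k : ℕ} {w : GV} (hw : w ∈ Vs2 k) (h : qmap w ∉ gset) :
    w = GV.orig (qmap w) := by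
  simp only [Vs2, Finset.mem_union, Finset.mem_image, Finset.mem_sdiff,
    Finset.mem_product] at hw
  rcases hw with (((⟨n, hn, rfl⟩ | ⟨i, hi, rfl⟩) | ⟨i, hi, rfl⟩) | ⟨p, hp, rfl⟩)
  · rfl
  · exact absurd hi h
  · exact absurd hi h
  · exact absurd hp.1 h

lemma gadget_reach {k : ℕ} {H : Finset (BBEdge GV)} (hC : Cev k H) {i : ℕ}
    (hi : i ∈ gset) (ε ε' : Bool) : bbReach H (GV.ga i, ε) (GV.gb i, ε') := by
  obtain ⟨j, _, hv, hf, ht, hgf, hgt⟩ := hC i hi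
  have h1 : bbStep H (GV.ga i, ε) (GV.mid i j, ε) :=
    Or.inr ⟨rfl, by cases ε <;> assumption⟩
  have h3 : bbStep H (GV.mid i j, ε') (GV.gb i, ε') :=
    Or.inr ⟨rfl, by cases ε' <;> assumption⟩
  have h2 : bbReach H (GV.mid i j, ε) (GV.mid i j, ε') := by
    by_cases hεε : ε = ε'
    · subst hεε; exact Relation.ReflTransGen.refl
    · exact Relation.ReflTransGen.single (Or.inl ⟨rfl, hεε, hv⟩)
  exact (Relation.ReflTransGen.single h1).trans (h2.tail h3)

lemma fwd_reach {H : Finset (BBEdge GV)} {u v : GV × Bool} (h : bbReach H u v) :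
    bbReach (contr H) (qmap u.1, u.2) (qmap v.1, v.2) := by
  induction h with
  | refl => exact Relation.ReflTransGen.refl
  | @tail b c hab hbc ih =>
    rcases hbc with ⟨h1, h2, h3⟩ | ⟨h1, h3⟩
    · exact ih.tail (Or.inl ⟨by rw [h1], h2, mem_contr.mpr ⟨⟨_, h3, rfl⟩, trivial⟩⟩)
    · by_cases hq : qmap b.1 = qmap c.1
      · rw [← hq, ← h1]; exact ih
      · exact ih.tail (Or.inr ⟨h1, mem_contr.mpr ⟨⟨_, h3, rfl⟩, hq⟩⟩)

lemma bwd_reach {k : ℕ} {H : Finset (BBEdge GV)}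
    (hH : H ⊆ bbEdges (Vs2 k) (E2 k)) (hC : Cev k H)
    {y : ℕ × Bool} (h : bbReach (contr H) (1, false) y) :
    (y.1 ∈ gset ∧ ∀ ε', bbReach H (GV.orig 1, false) (GV.gb y.1, ε')) ∨
      (y.1 ∉ gset ∧ bbReach H (GV.orig 1, false) (GV.orig y.1, y.2)) := by
  induction h with
  | refl => exact Or.inr ⟨by decide, Relation.ReflTransGen.refl⟩
  | @tail b c hab hbc ih =>
    rcases hbc with ⟨h1, h2, h3⟩ | ⟨h1, h3⟩
    · -- vertical step
      obtain ⟨⟨e, he, hce⟩, -⟩ := mem_contr.mp h3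
      cases e with
      | horiz x y ε => simp [contrEdge] at hce
      | vert w =>
        have hqw : qmap w = b.1 := by simpa [contrEdge] using hce
        rcases ih with ⟨hg, hr⟩ | ⟨hg, hr⟩
        · exact Or.inl ⟨h1 ▸ hg, fun ε' => h1 ▸ hr ε'⟩
        · right
          have hw : w = GV.orig b.1 := by
            rcases bbEdges_cases (hH he) with ⟨w', hw', heq⟩ | ⟨p, _, ε, heq⟩
            · cases heq
              exact hqw ▸ Vs2_orig hw' (hqw ▸ hg)
            · exact absurd heq (by simp)
          refine ⟨h1 ▸ hg, hr.tail (Or.inl ⟨by rw [h1], h2, ?_⟩)⟩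
          exact hw ▸ he
    · -- horizontal step
      obtain ⟨⟨e, he, hce⟩, hnl⟩ := mem_contr.mp h3
      cases e with
      | vert w => simp [contrEdge] at hce
      | horiz x y ε =>
        have hx : qmap x = b.1 := by simpa [contrEdge] using congrArg (fun e => match e with | BBEdge.horiz a _ _ => a | _ => 0) hce
        have hy : qmap y = c.1 := by simpa [contrEdge] using congrArg (fun e => match e with | BBEdge.horiz _ a _ => a | _ => 0) hce
        have hε : ε = b.2 := by simpa [contrEdge] using congrArg (fun e => match e with | BBEdge.horiz _ _ d => d | _ => false) hce
        have hne : b.1 ≠ c.1 := by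
          simpa [contrEdge, ← hce, notLoop, hx, hy] using hnl
        -- identify the edge as a copy of an E1-edge
        have hedge : x = srcV b.1 ∧ y = tgtV c.1 := by
          rcases bbEdges_cases (hH he) with ⟨w', _, heq⟩ | ⟨p, hp, ε', heq⟩
          · exact absurd heq (by simp)
          · obtain ⟨hpx, hpy, -⟩ : x = p.1 ∧ y = p.2 ∧ ε = ε' := by
              cases heq; exact ⟨rfl, rfl, rfl⟩
            subst hpx; subst hpy
            simp only [E2, Finset.mem_union, Finset.mem_image] at hp
            rcases hp with (⟨q, _, hq⟩ | ⟨q, _, hq⟩) | ⟨q, _, hq⟩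
            · have h1' : p.1 = srcV q.1 := by rw [← hq]
              have h2' : p.2 = tgtV q.2 := by rw [← hq]
              rw [h1', h2']
              rw [h1', qmap_srcV] at hx
              rw [h2', qmap_tgtV] at hy
              rw [hx, hy]; exact ⟨rfl, rfl⟩
            · exfalso
              have h1' : p.1 = GV.ga q.1 := by rw [← hq]
              have h2' : p.2 = GV.mid q.1 q.2 := by rw [← hq]
              apply hne
              rw [← hx, ← hy, h1', h2']; rfl
            · exfalso
              have h1' : p.1 = GV.mid q.1 q.2 := by rw [← hq]
              have h2' : p.2 = GV.gb q.1 := by rw [← hq]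
              apply hne
              rw [← hx, ← hy, h1', h2']; rfl
        have hsrc : bbReach H (GV.orig 1, false) (srcV b.1, b.2) := by
          rcases ih with ⟨hg, hr⟩ | ⟨hg, hr⟩
          · have : srcV b.1 = GV.gb b.1 := by simp [srcV, gset] at hg ⊢; rcases hg with h|h|h <;> simp [h]
            rw [this]; exact hr b.2
          · have : srcV b.1 = GV.orig b.1 := by simp [srcV, hg]
            rw [this]; exact hr
        have hstep : bbReach H (GV.orig 1, false) (tgtV c.1, b.2) := by
          refine hsrc.tail (Or.inr ⟨rfl, ?_⟩)
          rw [← hedge.1, ← hedge.2, ← hε]; exact he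
        by_cases hc : c.1 ∈ gset
        · have : tgtV c.1 = GV.ga c.1 := by simp [tgtV, hc]
          rw [this] at hstep
          exact Or.inl ⟨hc, fun ε' => hstep.trans (gadget_reach hC hc b.2 ε')⟩
        · have : tgtV c.1 = GV.orig c.1 := by simp [tgtV, hc]
          rw [this, h1] at hstep
          exact Or.inr ⟨hc, hstep⟩

/-- if `H` is a subgraph of the bunkbed graph of `G₂ᵏ` lying in the
event `C`, then for each `ε ∈ {-,+}`, `H` contains a directed path from `1⁻` to
`9^ε` if and only if the contracted subgraph `γ(H)` of the bunkbed graph of `G₁`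
does. -/
theorem contraction_preserves_connectivity (k : ℕ) (H : Finset (BBEdge GV))
    (hH : H ⊆ bbEdges (Vs2 k) (E2 k)) (hC : Cev k H) :
    ∀ ε : Bool,
      (bbReach H (GV.orig 1, false) (GV.orig 9, ε) ↔
        bbReach (contr H) (1, false) (9, ε)) := by
  intro ε
  constructor
  · intro h
    exact fwd_reach h
  · intro h
    rcases bwd_reach hH hC h with ⟨hg, -⟩ | ⟨-, hr⟩
    · exact absurd hg (show (9:ℕ) ∉ gset by decide)
    · exact hr
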